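/- arXiv:2002.11733 — 7 statements merged into one kernel-verified Lean document; each statement's English description precedes it below -/
import Mathlib

section
/- Let 𝒜 = 𝔽₂ⁿ (n ≥ 1) be equipped with a symmetric nondegenerate 𝔽₂-bilinear form ω, let L ⊆ 𝒜 be a subspace, let E₁,…,Eₙ be positive real numbers, and let β > 0. Define the energy functional E(B) = Σᵢ Eᵢ·χ(ω(B,êᵢ)), where êᵢ are the standard basis vectors and χ(x) = 1 if x = 1 and 0 if x = 0. Then Σ_{B ∈ L^{⊥ω}} exp(−β·E(B)) = (1/|L|) · (∏ᵢ (1 + exp(−β·Eᵢ))) · Σ_{A ∈ L} ∏_{i : Aᵢ = 1} tanh(β·Eᵢ/2). (Generalized Wegner duality, Theorem 1 of the paper: the thermal partition function of the perpendicular-complement model equals the full partition function times a dual partition function at dual inverse temperature β′ = −ln tanh(β/2).) -/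
/-!
Poisson summation over `𝔽₂`: the indicator of `L^{⊥ω}` is the average over `A ∈ L` of the
characters `B ↦ (-1)^{ω(A,B)}`. Since `ω` is symmetric and nondegenerate, `B ↦ (ω(B,êᵢ))ᵢ` is a
linear bijection of `𝔽₂ⁿ` turning `ω(A,B)` into a dot product `A ⬝ᵥ C`, so each character sum
becomes the Fourier transform of the Boltzmann weight. That weight is a product over coordinates,
and coordinate `i` contributes `1 + e^{-βEᵢ}` if `Aᵢ = 0` and
`1 - e^{-βEᵢ} = (1 + e^{-βEᵢ}) tanh(βEᵢ/2)` if `Aᵢ = 1`.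
-/

open Finset

/-- Hamming-type support of a binary vector. -/
def supp {n : ℕ} (v : Fin n → ZMod 2) : Finset (Fin n) :=
  Finset.univ.filter (fun i => v i = 1)

lemma AddChar.map_sum_eq_prod {ι A M : Type*} [AddCommMonoid A] [CommMonoid M]
    (ψ : AddChar A M) (s : Finset ι) (f : ι → A) : ψ (∑ i ∈ s, f i) = ∏ i ∈ s, ψ (f i) := by
  classical
  induction s using Finset.induction_on with
  | empty => simp
  | insert a s ha ih => rw [sum_insert ha, prod_insert ha, map_add_eq_mul, ih]

open scoped Classical in
lemma AddChar.sum_comp_eq_ite {G H R : Type*} [AddGroup G] [Fintype G] [AddMonoid H]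
    [CommRing R] [IsDomain R] (ψ : AddChar H R) (hψ : Function.Injective ψ) (f : G →+ H) :
    ∑ a, ψ (f a) = if ∀ a, f a = 0 then (Fintype.card G : R) else 0 := by
  have hzero : ψ.compAddMonoidHom f = 0 ↔ ∀ a, f a = 0 := by
    simp only [AddChar.eq_zero_iff, AddChar.compAddMonoidHom_apply, ← hψ.eq_iff,
      AddChar.map_zero_eq_one]
  simpa only [hzero, AddChar.compAddMonoidHom_apply] using (ψ.compAddMonoidHom f).sum_eq_ite

noncomputable def signChar : AddChar (ZMod 2) ℝ := AddChar.zmodChar 2 neg_one_sq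

lemma ZMod.eq_zero_or_eq_one (x : ZMod 2) : x = 0 ∨ x = 1 := by revert x; decide

@[simp] lemma signChar_one : signChar 1 = -1 := by
  simp [signChar, AddChar.zmodChar_apply, ZMod.val_one]

lemma signChar_injective : Function.Injective signChar := by
  intro x y h
  rcases x.eq_zero_or_eq_one with rfl | rfl <;>
    rcases y.eq_zero_or_eq_one with rfl | rfl <;> first | rfl | norm_num at h

lemma Real.one_sub_exp_neg_eq_mul_tanh_half (t : ℝ) :
    1 - Real.exp (-t) = (1 + Real.exp (-t)) * Real.tanh (t / 2) := by
  have hsq : Real.exp (-t) = Real.exp (-(t / 2)) * Real.exp (-(t / 2)) := by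
    rw [← Real.exp_add]; ring_nf
  have hinv : Real.exp (t / 2) * Real.exp (-(t / 2)) = 1 := by rw [← Real.exp_add]; simp
  rw [Real.tanh_eq, hsq]
  field_simp
  linear_combination (-2 * Real.exp (-(t / 2))) * hinv

open scoped Classical in
theorem sum_orthogonal_eq_card_inv_mul_sum_signChar {V : Type*} [AddCommGroup V]
    [Module (ZMod 2) V] [Fintype V]
    (ω : LinearMap.BilinForm (ZMod 2) V) (L : Submodule (ZMod 2) V) (f : V → ℝ) :
    ∑ B ∈ univ.filter (fun B => ∀ A ∈ L, ω A B = 0), f B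
      = (Nat.card L : ℝ)⁻¹ * ∑ A : L, ∑ B, signChar (ω A B) * f B := by
  have horth : ∀ B, ∑ A : L, signChar (ω A B)
      = if ∀ A ∈ L, ω A B = 0 then (Nat.card L : ℝ) else 0 := by
    intro B
    rw [Nat.card_eq_fintype_card]
    simpa using signChar.sum_comp_eq_ite signChar_injective
      ((ω.flip B).domRestrict L).toAddMonoidHom
  rw [sum_filter, sum_comm, mul_sum]
  refine sum_congr rfl fun B _ => ?_
  rw [← sum_mul, horth, ← mul_assoc]
  split_ifs <;> simp

lemma LinearMap.BilinForm.apply_eq_dotProduct {R ι : Type*} [CommSemiring R] [Fintype ι]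
    [DecidableEq ι]
    (ω : LinearMap.BilinForm R (ι → R)) (B v : ι → R) :
    ω B v = v ⬝ᵥ fun i => ω B (Pi.single i 1) := by
  conv_lhs => rw [← univ_sum_single v]
  simp only [map_sum, dotProduct]
  refine sum_congr rfl fun i _ => ?_
  rw [← smul_eq_mul, ← map_smul, ← Pi.single_smul', smul_eq_mul, mul_one]

lemma LinearMap.BilinForm.injective_apply_single {R ι : Type*} [CommRing R] [Fintype ι]
    [DecidableEq ι]
    (ω : LinearMap.BilinForm R (ι → R)) (hnondeg : ∀ A, (∀ B, ω A B = 0) → A = 0) :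
    Function.Injective fun B i => ω B (Pi.single i 1) := by
  intro a b hab
  refine sub_eq_zero.1 (hnondeg _ fun v => ?_)
  rw [ω.apply_eq_dotProduct, map_sub]
  simp only [LinearMap.sub_apply, congrFun hab, sub_self]
  exact dotProduct_zero v

lemma sum_signChar_mul_exp_neg (a : ZMod 2) (t : ℝ) :
    ∑ x : ZMod 2, signChar (a * x) * Real.exp (-t * x.val)
      = (1 + Real.exp (-t)) * if a = 1 then Real.tanh (t / 2) else 1 := by
  rw [show (univ : Finset (ZMod 2)) = {0, 1} from rfl, sum_pair zero_ne_one]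
  rcases a.eq_zero_or_eq_one with rfl | rfl
  · simp [ZMod.val_one]
  · simp [ZMod.val_one, ← Real.one_sub_exp_neg_eq_mul_tanh_half, sub_eq_add_neg]

theorem sum_signChar_dotProduct_mul_boltzmann {n : ℕ} (A : Fin n → ZMod 2) (β : ℝ)
    (E : Fin n → ℝ) :
    ∑ C : Fin n → ZMod 2, signChar (A ⬝ᵥ C) * Real.exp (-β * ∑ i, E i * (C i).val)
      = (∏ i, (1 + Real.exp (-β * E i))) * ∏ i ∈ supp A, Real.tanh (β * E i / 2) := by
  have hfactor : ∀ C : Fin n → ZMod 2,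
      signChar (A ⬝ᵥ C) * Real.exp (-β * ∑ i, E i * (C i).val)
        = ∏ i, signChar (A i * C i) * Real.exp (-(β * E i) * (C i).val) := by
    intro C
    rw [dotProduct, signChar.map_sum_eq_prod, mul_sum, Real.exp_sum, ← prod_mul_distrib]
    simp only [mul_assoc, neg_mul]
  rw [sum_congr rfl fun C _ => hfactor C,
    ← Fintype.prod_sum fun i x => signChar (A i * x) * Real.exp (-(β * E i) * x.val)]
  simp only [sum_signChar_mul_exp_neg, prod_mul_distrib, supp, prod_filter]
  simp only [neg_mul]

open scoped Classical in
theorem generalized_wegner_duality_general {n : ℕ}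
    (ω : LinearMap.BilinForm (ZMod 2) (Fin n → ZMod 2))
    (hsymm : ∀ A B, ω A B = ω B A)
    (hnondeg : ∀ A, (∀ B, ω A B = 0) → A = 0)
    (L : Submodule (ZMod 2) (Fin n → ZMod 2))
    (E : Fin n → ℝ) (β : ℝ) :
    ∑ B ∈ Finset.univ.filter (fun B => ∀ A ∈ L, ω A B = 0),
        Real.exp (-β * ∑ i, E i * ((ω B (Pi.single i 1)).val : ℝ))
      = (1 / (Nat.card L : ℝ)) * (∏ i, (1 + Real.exp (-β * E i))) *
          ∑ A ∈ Finset.univ.filter (fun A => A ∈ L),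
            ∏ i ∈ supp A, Real.tanh (β * E i / 2) := by
  have hbij := Finite.injective_iff_bijective.mp (ω.injective_apply_single hnondeg)
  have hchange : ∀ A,
      ∑ B, signChar (ω A B) * Real.exp (-β * ∑ i, E i * ((ω B (Pi.single i 1)).val : ℝ))
        = ∑ C : Fin n → ZMod 2, signChar (A ⬝ᵥ C) * Real.exp (-β * ∑ i, E i * (C i).val) := by
    intro A
    simp_rw [hsymm A, ω.apply_eq_dotProduct _ A]
    exact hbij.sum_comp (fun C => signChar (A ⬝ᵥ C) * Real.exp (-β * ∑ i, E i * (C i).val))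
  rw [sum_orthogonal_eq_card_inv_mul_sum_signChar]
  simp_rw [hchange, sum_signChar_dotProduct_mul_boltzmann]
  rw [sum_subtype (univ.filter (· ∈ L)) mem_filter_univ, ← mul_sum, one_div, mul_assoc]

open scoped Classical in
/-- **Generalized Wegner duality** (Theorem 1):
the thermal partition function of the perpendicular-complement model `L^{⊥ω}`
equals the full partition function times the dual partition function over `L`,
with dual weights `tanh (β Eᵢ / 2)`. -/
theorem generalized_wegner_duality {n : ℕ} (hn : 1 ≤ n)
    (ω : LinearMap.BilinForm (ZMod 2) (Fin n → ZMod 2))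
    (hsymm : ∀ A B, ω A B = ω B A)
    (hnondeg : ∀ A, (∀ B, ω A B = 0) → A = 0)
    (L : Submodule (ZMod 2) (Fin n → ZMod 2))
    (E : Fin n → ℝ) (hE : ∀ i, 0 < E i) (β : ℝ) (hβ : 0 < β) :
    ∑ B ∈ Finset.univ.filter (fun B => ∀ A ∈ L, ω A B = 0),
        Real.exp (-β * ∑ i, E i * ((ω B (Pi.single i 1)).val : ℝ))
      = (1 / (Nat.card L : ℝ)) * (∏ i, (1 + Real.exp (-β * E i))) *
          ∑ A ∈ Finset.univ.filter (fun A => A ∈ L),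
            ∏ i ∈ supp A, Real.tanh (β * E i / 2) :=
  generalized_wegner_duality_general ω hsymm hnondeg L E β
end

section
/- For every h ∈ 𝔽₂ⁿ and every real β: Σ_{f ∈ 𝔽₂ⁿ} (−1)^{χ(f·h)} · exp(−β·‖f‖) = (1 + exp(−β))ⁿ · (tanh(β/2))^{‖h‖}. (The Fourier transform of the Gibbs weight with respect to the characters of 𝔽₂ⁿ, the key computational identity of Appendices A and B.) -/
open Finset

/-- Hamming weight of a binary vector. -/
def wt {n : ℕ} (v : Fin n → ZMod 2) : ℕ :=
  (Finset.univ.filter (fun i => v i = 1)).card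

/-!
Both the character `f ↦ (-1)^{f·h}` and the Gibbs weight `f ↦ e^{-β‖f‖}` are products over the
coordinates, so the sum over `𝔽₂ⁿ` factors into `n` sums over `𝔽₂`. The `i`-th one is
`1 + e^{-β}` if `hᵢ = 0` and `1 - e^{-β} = (1 + e^{-β}) tanh(β/2)` if `hᵢ = 1`.
-/

open Real

theorem ZMod.sum_univ_two {M : Type*} [AddCommMonoid M] (g : ZMod 2 → M) :
    ∑ x, g x = g 0 + g 1 :=
  Fin.sum_univ_two g

lemma neg_one_pow_val_sum {R ι : Type*} [CommRing R] (s : Finset ι) (g : ι → ZMod 2) :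
    (-1 : R) ^ (∑ i ∈ s, g i).val = ∏ i ∈ s, (-1 : R) ^ (g i).val := by
  have hcast : ∑ i ∈ s, g i = ((∑ i ∈ s, (g i).val : ℕ) : ZMod 2) := by
    simp only [Nat.cast_sum, ZMod.natCast_zmod_val]
  rw [hcast, ZMod.val_natCast, ← neg_one_pow_eq_pow_mod_two, prod_pow_eq_pow_sum]

lemma wt_eq_sum_val {n : ℕ} (v : Fin n → ZMod 2) : wt v = ∑ i, (v i).val := by
  have hval : ∀ a : ZMod 2, a.val = if a = 1 then 1 else 0 := by decide
  simp only [wt, card_filter, hval]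

lemma neg_one_pow_dotProduct_mul_exp_wt {n : ℕ} (f h : Fin n → ZMod 2) (β : ℝ) :
    (-1 : ℝ) ^ (∑ i, f i * h i).val * exp (-β * wt f)
      = ∏ i, (-1 : ℝ) ^ (f i * h i).val * exp (-β * (f i).val) := by
  rw [prod_mul_distrib, neg_one_pow_val_sum, ← exp_sum, wt_eq_sum_val, Nat.cast_sum, mul_sum]

lemma one_add_exp_neg_mul_tanh_half (β : ℝ) :
    (1 + exp (-β)) * tanh (β / 2) = 1 - exp (-β) := by
  have hsq : exp (-β) = exp (-(β / 2)) * exp (-(β / 2)) := by rw [← exp_add]; ring_nf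
  have hinv : exp (β / 2) * exp (-(β / 2)) = 1 := by rw [← exp_add]; simp
  rw [tanh_eq, mul_div_assoc', div_eq_iff (by positivity), hsq]
  linear_combination 2 * exp (-(β / 2)) * hinv

lemma sum_neg_one_pow_mul_exp_val (a : ZMod 2) (β : ℝ) :
    ∑ x : ZMod 2, (-1 : ℝ) ^ (x * a).val * exp (-β * x.val)
      = (1 + exp (-β)) * tanh (β / 2) ^ a.val := by
  obtain rfl | rfl : a = 0 ∨ a = 1 := by revert a; decide
  · simp [ZMod.sum_univ_two, ZMod.val_one, -ZMod.natCast_val]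
  · simp [ZMod.sum_univ_two, ZMod.val_one, -ZMod.natCast_val, one_add_exp_neg_mul_tanh_half,
      sub_eq_add_neg]

/-- **Fourier transform of the Gibbs weight** with respect to the characters of `𝔽₂ⁿ`
(the key computational identity of Appendices A and B):
`Σ_f (−1)^{χ(f·h)} e^{−β‖f‖} = (1 + e^{−β})ⁿ (tanh(β/2))^{‖h‖}`. -/
theorem gibbs_fourier_transform {n : ℕ} (h : Fin n → ZMod 2) (β : ℝ) :
    ∑ f : Fin n → ZMod 2,
        (-1 : ℝ) ^ (∑ i, f i * h i).val * Real.exp (-β * (wt f : ℝ))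
      = (1 + Real.exp (-β)) ^ n * Real.tanh (β / 2) ^ wt h := by
  calc ∑ f : Fin n → ZMod 2, (-1 : ℝ) ^ (∑ i, f i * h i).val * exp (-β * (wt f : ℝ))
      = ∑ f : Fin n → ZMod 2, ∏ i, (-1 : ℝ) ^ (f i * h i).val * exp (-β * (f i).val) := by
        simp only [neg_one_pow_dotProduct_mul_exp_wt]
    _ = ∏ i, ∑ x : ZMod 2, (-1 : ℝ) ^ (x * h i).val * exp (-β * x.val) := by
        rw [Fintype.prod_sum]
    _ = ∏ i, (1 + exp (-β)) * tanh (β / 2) ^ (h i).val := by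
        simp only [sum_neg_one_pow_mul_exp_val]
    _ = (1 + exp (-β)) ^ n * tanh (β / 2) ^ wt h := by
        rw [prod_mul_distrib, prod_const, card_univ, Fintype.card_fin, prod_pow_eq_pow_sum,
          wt_eq_sum_val]
end

section
/- Let 𝒜 = 𝔽₂ⁿ carry a symmetric nondegenerate 𝔽₂-bilinear form ω and ℱ = 𝔽₂^m carry a symmetric nondegenerate 𝔽₂-bilinear form λ, and let φ : 𝒜 → ℱ and ψ : ℱ → 𝒜 be 𝔽₂-linear maps satisfying the adjointness (braiding) relation λ(φ(A), f) = ω(A, ψ(f)) for all A ∈ 𝒜, f ∈ ℱ. Define the ω-weight w(J) = #{i : ω(J, êᵢ) = 1}. Then for every β > 0: Σ_{J ∈ range ψ} exp(−β·w(J)) = (1/|ker φ|) · (1 + exp(−β))ⁿ · Σ_{C ∈ ker φ} (tanh(β/2))^{‖C‖}. (The thermal partition function of a stabilizer code at low temperature is Wegner-dual to a high-temperature model of its constraints, i.e. of ker φ.) -/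
/-!
With `τ = tanh (β / 2)` one has `(1 + e^{-β}) (1 + τ (-1)^a) = 2 e^{-β a}` for `a ∈ 𝔽₂`, so each
Boltzmann weight `e^{-β w(J)}` is `(1 + e^{-β})ⁿ / 2ⁿ` times the Fourier transform
`∑_C τ^{‖C‖} (-1)^{ω(J, C)}`. Summing over `J ∈ range ψ` and exchanging the sums, the character
sum `∑_{J ∈ range ψ} (-1)^{ω(J, C)}` is `|range ψ|` on the ω-orthogonal complement of `range ψ`
and vanishes off it. The braiding relation identifies that complement with `ker φ`, and
nondegeneracy of `ω` gives `|range ψ| · |ker φ| = 2ⁿ`.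
-/

open Finset

noncomputable def sgn : AddChar (ZMod 2) ℝ where
  toFun a := (-1) ^ a.val
  map_zero_eq_one' := by simp
  map_add_eq_mul' a b := by
    rw [ZMod.val_add, ← pow_add, neg_one_pow_eq_pow_mod_two (n := a.val + b.val)]

lemma sgn_apply (a : ZMod 2) : sgn a = (-1) ^ a.val := rfl

@[simp] lemma sgn_one : sgn 1 = -1 := by simp [sgn_apply, ZMod.val_one]

lemma sgn_eq_one_iff {a : ZMod 2} : sgn a = 1 ↔ a = 0 := by
  rw [sgn_apply, neg_one_pow_eq_one_iff_even (by norm_num), ← ZMod.natCast_eq_zero_iff_even,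
    ZMod.natCast_zmod_val]

lemma sgn_sum {ι : Type*} (s : Finset ι) (f : ι → ZMod 2) :
    sgn (∑ i ∈ s, f i) = ∏ i ∈ s, sgn (f i) := by
  classical
  induction s using Finset.induction_on with
  | empty => simp
  | insert a s ha ih => rw [sum_insert ha, prod_insert ha, AddChar.map_add_eq_mul, ih]

lemma sum_pow_wt_mul_sgn_dotProduct {n : ℕ} (t : ℝ) (v : Fin n → ZMod 2) :
    ∑ C, t ^ wt C * sgn (v ⬝ᵥ C) = ∏ i, (1 + t * sgn (v i)) := by
  have hC : ∀ C : Fin n → ZMod 2,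
      t ^ wt C * sgn (v ⬝ᵥ C) = ∏ i, (if C i = 1 then t else 1) * sgn (v i * C i) := by
    intro C
    rw [prod_mul_distrib, dotProduct, sgn_sum, prod_ite, prod_const, prod_const_one, mul_one, wt]
  rw [Fintype.sum_congr _ _ hC,
    ← Fintype.prod_sum fun i (c : ZMod 2) => (if c = 1 then t else 1) * sgn (v i * c)]
  refine Fintype.prod_congr _ _ fun i => ?_
  rw [show (univ : Finset (ZMod 2)) = {0, 1} by decide, sum_pair zero_ne_one]
  simp

lemma LinearMap.apply_eq_dotProduct_single {ι R : Type*} [Fintype ι] [DecidableEq ι]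
    [CommSemiring R] (f : (ι → R) →ₗ[R] R) (x : ι → R) :
    f x = (fun i => f (Pi.single i 1)) ⬝ᵥ x := by
  conv_lhs => rw [pi_eq_sum_univ' x]
  simp [dotProduct, mul_comm]

open scoped Classical in
lemma sum_sgn_submodule {V : Type*} [AddCommGroup V] [Module (ZMod 2) V] [Fintype V]
    (W : Submodule (ZMod 2) V) (g : V →ₗ[ZMod 2] ZMod 2) :
    ∑ J ∈ univ.filter (· ∈ W), sgn (g J) = if ∀ J ∈ W, g J = 0 then (Nat.card W : ℝ) else 0 := by
  have h := AddChar.sum_eq_ite (sgn.compAddMonoidHom (g ∘ₗ W.subtype).toAddMonoidHom)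
  simp only [AddChar.compAddMonoidHom_apply, LinearMap.toAddMonoidHom_coe, LinearMap.coe_comp,
    Function.comp_apply, Submodule.coe_subtype] at h
  rw [sum_subtype (p := (· ∈ W)) _ (fun _ => by simp), h, Nat.card_eq_fintype_card]
  congr 1
  simp [AddChar.ext_iff, sgn_eq_one_iff]

open scoped Classical in
theorem card_mul_sum_orthogonal_pow_wt {n : ℕ}
    (ω : LinearMap.BilinForm (ZMod 2) (Fin n → ZMod 2)) (R : Submodule (ZMod 2) (Fin n → ZMod 2))
    (t : ℝ) :
    Nat.card R * ∑ C ∈ univ.filter (· ∈ ω.orthogonal R), t ^ wt C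
      = ∑ J ∈ univ.filter (· ∈ R), ∏ i, (1 + t * sgn (ω J (Pi.single i 1))) := by
  calc Nat.card R * ∑ C ∈ univ.filter (· ∈ ω.orthogonal R), t ^ wt C
      = ∑ C, t ^ wt C * ∑ J ∈ univ.filter (· ∈ R), sgn (ω.flip C J) := by
        rw [mul_sum, sum_filter]
        refine sum_congr rfl fun C _ => ?_
        rw [sum_sgn_submodule]
        simp [mul_comm]
    _ = ∑ J ∈ univ.filter (· ∈ R), ∑ C, t ^ wt C * sgn ((fun i => ω J (Pi.single i 1)) ⬝ᵥ C) := by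
        simp only [mul_sum]
        rw [sum_comm]
        simp [← LinearMap.apply_eq_dotProduct_single]
    _ = _ := sum_congr rfl fun J _ => sum_pow_wt_mul_sgn_dotProduct t _

lemma LinearMap.BilinForm.card_mul_card_orthogonal {K V : Type*} [Field K]
    [AddCommGroup V] [Module K V] [Module.Finite K V] {B : LinearMap.BilinForm K V}
    (hB : B.SeparatingLeft) (W : Submodule K V) :
    Nat.card W * Nat.card (B.orthogonal W) = Nat.card V := by
  have h := B.finrank_add_finrank_orthogonal' W
  rw [LinearMap.separatingLeft_iff_ker_eq_bot.1 hB, inf_bot_eq, finrank_bot, add_zero] at h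
  rw [Module.natCard_eq_pow_finrank (K := K) (V := W),
    Module.natCard_eq_pow_finrank (K := K) (V := B.orthogonal W),
    Module.natCard_eq_pow_finrank (K := K) (V := V), ← pow_add, h]

lemma LinearMap.ker_eq_orthogonal_range {R M N : Type*} [CommSemiring R] [AddCommMonoid M]
    [Module R M] [AddCommMonoid N] [Module R N] {ω : LinearMap.BilinForm R M}
    {lam : LinearMap.BilinForm R N} {φ : M →ₗ[R] N} {ψ : N →ₗ[R] M} (hω : ω.IsRefl)
    (hlam : lam.SeparatingLeft) (hadj : ∀ A f, lam (φ A) f = ω A (ψ f)) :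
    LinearMap.ker φ = ω.orthogonal (LinearMap.range ψ) := by
  ext C
  simp only [LinearMap.mem_ker, LinearMap.BilinForm.mem_orthogonal_iff, LinearMap.mem_range,
    forall_exists_index, forall_apply_eq_imp_iff]
  constructor
  · intro hC f
    exact hω _ _ (by rw [← hadj, hC, map_zero, LinearMap.zero_apply])
  · intro h
    exact hlam _ fun f => by rw [hadj]; exact hω _ _ (h f)

lemma tanh_half_eq (β : ℝ) : Real.tanh (β / 2) = (1 - Real.exp (-β)) / (1 + Real.exp (-β)) := by
  have hsq : Real.exp (β / 2) * Real.exp (-(β / 2)) = 1 := by rw [← Real.exp_add]; simp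
  have hexp : Real.exp (-β) = Real.exp (-(β / 2)) * Real.exp (-(β / 2)) := by
    rw [← Real.exp_add]; ring_nf
  rw [Real.tanh_eq, hexp, div_eq_div_iff (by positivity) (by positivity)]
  linear_combination 2 * Real.exp (-(β / 2)) * hsq

lemma prod_one_add_tanh_half_mul_sgn {n : ℕ} (β : ℝ) (v : Fin n → ZMod 2) :
    (1 + Real.exp (-β)) ^ n * ∏ i, (1 + Real.tanh (β / 2) * sgn (v i))
      = 2 ^ n * Real.exp (-β * wt v) := by
  set x := Real.exp (-β)
  have hcoord : ∀ a : ZMod 2,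
      (1 + x) * (1 + Real.tanh (β / 2) * sgn a) = 2 * if a = 1 then x else 1 := by
    intro a
    rw [tanh_half_eq]
    obtain rfl | rfl : a = 0 ∨ a = 1 := by revert a; decide
    all_goals
      simp only [AddChar.map_zero_eq_one, sgn_one, mul_neg, mul_one, zero_ne_one, ↓reduceIte]
      field_simp
      ring
  rw [← Fin.prod_const n (1 + x), ← prod_mul_distrib, Fintype.prod_congr _ _ fun i => hcoord (v i),
    prod_mul_distrib, Fin.prod_const, prod_ite, prod_const, prod_const_one, mul_one,
    mul_comm (-β), Real.exp_nat_mul, wt]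

open scoped Classical in
theorem wegner_duality {n : ℕ} {ω : LinearMap.BilinForm (ZMod 2) (Fin n → ZMod 2)}
    (hω : ω.SeparatingLeft) (R : Submodule (ZMod 2) (Fin n → ZMod 2)) (β : ℝ) :
    ∑ J ∈ univ.filter (· ∈ R), Real.exp (-β * wt fun i => ω J (Pi.single i 1))
      = 1 / Nat.card (ω.orthogonal R) * (1 + Real.exp (-β)) ^ n *
          ∑ C ∈ univ.filter (· ∈ ω.orthogonal R), Real.tanh (β / 2) ^ wt C := by
  have hcard : (Nat.card R : ℝ) * Nat.card (ω.orthogonal R) = 2 ^ n := by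
    exact_mod_cast (ω.card_mul_card_orthogonal hω R).trans (by simp)
  have hfourier : 2 ^ n * ∑ J ∈ univ.filter (· ∈ R), Real.exp (-β * wt fun i => ω J (Pi.single i 1))
      = (1 + Real.exp (-β)) ^ n *
          (Nat.card R * ∑ C ∈ univ.filter (· ∈ ω.orthogonal R), Real.tanh (β / 2) ^ wt C) := by
    rw [card_mul_sum_orthogonal_pow_wt, mul_sum, mul_sum]
    exact sum_congr rfl fun J _ => (prod_one_add_tanh_half_mul_sgn β _).symm
  have hR : (Nat.card R : ℝ) ≠ 0 := Nat.cast_ne_zero.2 Nat.card_pos.ne'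
  have hK : (Nat.card (ω.orthogonal R) : ℝ) ≠ 0 := Nat.cast_ne_zero.2 Nat.card_pos.ne'
  rw [div_mul_eq_mul_div, div_mul_eq_mul_div, one_mul, eq_div_iff hK]
  apply mul_left_cancel₀ hR
  linear_combination
    (∑ J ∈ univ.filter (· ∈ R), Real.exp (-β * wt fun i => ω J (Pi.single i 1))) * hcard + hfourier

open scoped Classical in
theorem stabilizer_thermal_dual_to_constraints_general {n m : ℕ}
    (ω : LinearMap.BilinForm (ZMod 2) (Fin n → ZMod 2))
    (lam : LinearMap.BilinForm (ZMod 2) (Fin m → ZMod 2))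
    (hωsymm : ∀ A B, ω A B = ω B A)
    (hωnondeg : ∀ A, (∀ B, ω A B = 0) → A = 0)
    (hlam_nondeg : ∀ f, (∀ g, lam f g = 0) → f = 0)
    (φ : (Fin n → ZMod 2) →ₗ[ZMod 2] (Fin m → ZMod 2))
    (ψ : (Fin m → ZMod 2) →ₗ[ZMod 2] (Fin n → ZMod 2))
    (hadj : ∀ A f, lam (φ A) f = ω A (ψ f))
    (β : ℝ) :
    ∑ J ∈ Finset.univ.filter (fun J => J ∈ LinearMap.range ψ),
        Real.exp (-β *
          ((Finset.univ.filter (fun i => ω J (Pi.single i 1) = 1)).card : ℝ))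
      = (1 / (Nat.card (LinearMap.ker φ) : ℝ)) * (1 + Real.exp (-β)) ^ n *
          ∑ C ∈ Finset.univ.filter (fun C => C ∈ LinearMap.ker φ),
            Real.tanh (β / 2) ^ wt C := by
  rw [LinearMap.ker_eq_orthogonal_range (fun A B h => hωsymm A B ▸ h) hlam_nondeg hadj]
  exact wegner_duality hωnondeg _ β

open scoped Classical in
/-- The thermal partition function of a stabilizer code (sum over the realizable
excitation patterns `range ψ`) is Wegner-dual to a high-temperature model of its
constraints `ker φ`, given a linear gauge structure `λ(φ(A), f) = ω(A, ψ(f))`. -/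
theorem stabilizer_thermal_dual_to_constraints {n m : ℕ}
    (ω : LinearMap.BilinForm (ZMod 2) (Fin n → ZMod 2))
    (lam : LinearMap.BilinForm (ZMod 2) (Fin m → ZMod 2))
    (hωsymm : ∀ A B, ω A B = ω B A)
    (hωnondeg : ∀ A, (∀ B, ω A B = 0) → A = 0)
    (hlam_symm : ∀ f g, lam f g = lam g f)
    (hlam_nondeg : ∀ f, (∀ g, lam f g = 0) → f = 0)
    (φ : (Fin n → ZMod 2) →ₗ[ZMod 2] (Fin m → ZMod 2))
    (ψ : (Fin m → ZMod 2) →ₗ[ZMod 2] (Fin n → ZMod 2))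
    (hadj : ∀ A f, lam (φ A) f = ω A (ψ f))
    (β : ℝ) (hβ : 0 < β) :
    ∑ J ∈ Finset.univ.filter (fun J => J ∈ LinearMap.range ψ),
        Real.exp (-β *
          ((Finset.univ.filter (fun i => ω J (Pi.single i 1) = 1)).card : ℝ))
      = (1 / (Nat.card (LinearMap.ker φ) : ℝ)) * (1 + Real.exp (-β)) ^ n *
          ∑ C ∈ Finset.univ.filter (fun C => C ∈ LinearMap.ker φ),
            Real.tanh (β / 2) ^ wt C :=
  stabilizer_thermal_dual_to_constraints_general ω lam hωsymm hωnondeg hlam_nondeg φ ψ hadj β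
end

section
/- Let 𝒜, 𝒜′, ℱ be finite-dimensional 𝔽₂-vector spaces with symmetric nondegenerate 𝔽₂-bilinear forms ω, ω′, λ respectively. Let φ : 𝒜 → ℱ, ψ : ℱ → 𝒜 satisfy λ(φ(A), f) = ω(A, ψ(f)) for all A, f, and let φ′ : 𝒜′ → ℱ, ψ′ : ℱ → 𝒜′ satisfy λ(φ′(A′), f) = ω′(A′, ψ′(f)) for all A′, f. Then the composite BrLE rule holds: (ker(ψ′ ∘ φ))^{⊥ω} = range(ψ ∘ φ′). (The composite gauge structure of two stabilizer codes on the same qubits again satisfies the braiding relation ω′(ψ′φ(A), A′) = λ(φ(A), φ′(A′)) = ω(A, ψφ′(A′)), and hence its BrLE rule.) -/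
/-!
Symmetry of `ω` and `λ` turns the adjunction between `φ` and `ψ` around, and composing it with
the adjunction between `φ'` and `ψ'` shows that `ψ ∘ φ'` and `ψ' ∘ φ` are adjoint with respect
to `ω'` and `ω`: `ω (ψ φ' a') a = λ (φ' a') (φ a) = ω' a' (ψ' φ a)`. For adjoint maps the
orthogonal of `range (ψ ∘ φ')` is `ker (ψ' ∘ φ)` as soon as `ω'` is nondegenerate, and taking
orthogonals once more, an involution for a nondegenerate reflexive form on a finite-dimensional
space, gives the claim.
-/

namespace LinearMap

variable {R K M M' : Type*}

section CommRing

variable [CommRing R] [AddCommGroup M] [Module R M] [AddCommGroup M'] [Module R M']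

theorem IsAdjointPair.symm_of_isSymm {B : LinearMap.BilinForm R M} {B' : LinearMap.BilinForm R M'}
    (hB : B.IsSymm) (hB' : B'.IsSymm) {f : M → M'} {g : M' → M} (h : IsAdjointPair B B' f g) :
    IsAdjointPair B' B g f := fun x y => by
  rw [hB.eq, ← h, hB'.eq]

theorem BilinForm.orthogonal_range_eq_ker (B : LinearMap.BilinForm R M)
    {B' : LinearMap.BilinForm R M'} (hB' : B'.SeparatingRight) {g : M' →ₗ[R] M} {h : M →ₗ[R] M'}
    (hgh : IsAdjointPair B' B g h) :
    B.orthogonal (range g) = ker h := by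
  ext y
  simp only [BilinForm.mem_orthogonal_iff, mem_range, mem_ker, forall_exists_index,
    forall_apply_eq_imp_iff, hgh _ y]
  exact ⟨hB' _, fun hy x => by rw [hy, map_zero]⟩

end CommRing

theorem BilinForm.orthogonal_ker_eq_range [Field K] [AddCommGroup M] [Module K M]
    [FiniteDimensional K M] [AddCommGroup M'] [Module K M'] {B : LinearMap.BilinForm K M}
    {B' : LinearMap.BilinForm K M'} (hB : B.Nondegenerate) (hBr : B.IsRefl)
    (hB' : B'.SeparatingRight) {g : M' →ₗ[K] M} {h : M →ₗ[K] M'}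
    (hgh : IsAdjointPair B' B g h) :
    B.orthogonal (ker h) = range g := by
  rw [← B.orthogonal_range_eq_ker hB' hgh, BilinForm.orthogonal_orthogonal hB hBr]

end LinearMap

theorem composite_brle_rule_general {A A' F : Type*}
    [AddCommGroup A] [Module (ZMod 2) A] [FiniteDimensional (ZMod 2) A]
    [AddCommGroup A'] [Module (ZMod 2) A']
    [AddCommGroup F] [Module (ZMod 2) F]
    (ω : LinearMap.BilinForm (ZMod 2) A) (ω' : LinearMap.BilinForm (ZMod 2) A')
    (lam : LinearMap.BilinForm (ZMod 2) F)
    (hωsymm : ∀ a b, ω a b = ω b a)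
    (hωnondeg : ∀ a, (∀ b, ω a b = 0) → a = 0)
    (hω'symm : ∀ a b, ω' a b = ω' b a)
    (hω'nondeg : ∀ a, (∀ b, ω' a b = 0) → a = 0)
    (hlam_symm : ∀ f g, lam f g = lam g f)
    (φ : A →ₗ[ZMod 2] F) (ψ : F →ₗ[ZMod 2] A)
    (hadj : ∀ a f, lam (φ a) f = ω a (ψ f))
    (φ' : A' →ₗ[ZMod 2] F) (ψ' : F →ₗ[ZMod 2] A')
    (hadj' : ∀ a' f, lam (φ' a') f = ω' a' (ψ' f)) :
    {b : A | ∀ c ∈ LinearMap.ker (ψ'.comp φ), ω c b = 0}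
      = (LinearMap.range (ψ.comp φ') : Set A) := by
  have hωrefl : ω.IsRefl := LinearMap.BilinForm.IsSymm.isRefl ⟨hωsymm⟩
  have hωnd : ω.Nondegenerate := hωrefl.nondegenerate_iff_separatingLeft.mpr hωnondeg
  have hω'sep : ω'.SeparatingRight := fun a ha => hω'nondeg a fun b => hω'symm a b ▸ ha b
  have hcomp : LinearMap.IsAdjointPair ω' ω (ψ.comp φ') (ψ'.comp φ) :=
    LinearMap.IsAdjointPair.comp hadj'
      (LinearMap.IsAdjointPair.symm_of_isSymm ⟨hωsymm⟩ ⟨hlam_symm⟩ hadj)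
  exact congrArg SetLike.coe (LinearMap.BilinForm.orthogonal_ker_eq_range hωnd hωrefl hω'sep hcomp)

/-- **Composite BrLE rule**: for two linear gauge structures sharing the field space `F`,
the composite gauge structure (with maps `ψ' ∘ φ : A → A'` and `ψ ∘ φ' : A' → A`)
satisfies `(ker(ψ' ∘ φ))^{⊥ω} = range(ψ ∘ φ')`. -/
theorem composite_brle_rule {A A' F : Type*}
    [AddCommGroup A] [Module (ZMod 2) A] [FiniteDimensional (ZMod 2) A]
    [AddCommGroup A'] [Module (ZMod 2) A'] [FiniteDimensional (ZMod 2) A']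
    [AddCommGroup F] [Module (ZMod 2) F] [FiniteDimensional (ZMod 2) F]
    (ω : LinearMap.BilinForm (ZMod 2) A) (ω' : LinearMap.BilinForm (ZMod 2) A')
    (lam : LinearMap.BilinForm (ZMod 2) F)
    (hωsymm : ∀ a b, ω a b = ω b a)
    (hωnondeg : ∀ a, (∀ b, ω a b = 0) → a = 0)
    (hω'symm : ∀ a b, ω' a b = ω' b a)
    (hω'nondeg : ∀ a, (∀ b, ω' a b = 0) → a = 0)
    (hlam_symm : ∀ f g, lam f g = lam g f)
    (hlam_nondeg : ∀ f, (∀ g, lam f g = 0) → f = 0)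
    (φ : A →ₗ[ZMod 2] F) (ψ : F →ₗ[ZMod 2] A)
    (hadj : ∀ a f, lam (φ a) f = ω a (ψ f))
    (φ' : A' →ₗ[ZMod 2] F) (ψ' : F →ₗ[ZMod 2] A')
    (hadj' : ∀ a' f, lam (φ' a') f = ω' a' (ψ' f)) :
    {b : A | ∀ c ∈ LinearMap.ker (ψ'.comp φ), ω c b = 0}
      = (LinearMap.range (ψ.comp φ') : Set A) :=
  composite_brle_rule_general ω ω' lam hωsymm hωnondeg hω'symm hω'nondeg hlam_symm φ ψ hadj φ' ψ'
    hadj'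
end

section
/- For every n ≥ 1 and t ∈ ℝ, the real-time partition function of the d = 1 Ising model satisfies: Σ_{J ∈ 𝔽₂ⁿ, ‖J‖ even} exp(−i·t·‖J‖) = 2^{n−1} · exp(−i·n·t/2) · ( (cos(t/2))ⁿ + (i·sin(t/2))ⁿ ), as an identity of complex numbers. (The set of even-weight vectors is the perpendicular complement of the constraint space {0, 𝟙} spanned by the all-ones vector; the two dual terms come from the trivial constraint and the constraint among all Ising bond terms.) -/
/-!
The weight enumerator of `𝔽₂ⁿ` is `∑_J z^‖J‖ = (1 + z)ⁿ`; adding its value at `-z` cancels the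
odd-weight vectors, so `2 ∑_{‖J‖ even} z^‖J‖ = (1 + z)ⁿ + (1 - z)ⁿ`. At `z = e^{-it}` the
half-angle factorizations `1 ± e^{-it} = 2 e^{-it/2} · (cos (t/2), i sin (t/2))` give the formula.
-/

open Finset

theorem pow_wt_eq_prod {R : Type*} [CommMonoid R] {n : ℕ} (z : R) (J : Fin n → ZMod 2) :
    z ^ wt J = ∏ i, if J i = 1 then z else 1 := by
  rw [prod_ite, prod_const, prod_const_one, mul_one, wt]

theorem sum_pow_wt {R : Type*} [CommSemiring R] (n : ℕ) (z : R) :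
    ∑ J : Fin n → ZMod 2, z ^ wt J = (1 + z) ^ n := by
  have h : ∑ a : ZMod 2, (if a = 1 then z else 1) = 1 + z := by
    rw [Fintype.sum_eq_add 0 1 zero_ne_one fun x hx =>
      (hx.2 ((by decide : ∀ a : ZMod 2, a ≠ 0 → a = 1) x hx.1)).elim]
    simp
  simp_rw [← h, Fintype.sum_pow, pow_wt_eq_prod]

theorem two_mul_sum_filter_even_pow {ι R : Type*} [CommRing R] (s : Finset ι) (w : ι → ℕ)
    (z : R) : 2 * ∑ i ∈ s with Even (w i), z ^ w i = ∑ i ∈ s, (z ^ w i + (-z) ^ w i) := by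
  rw [← sum_filter_add_sum_filter_not s (fun i => Even (w i)), mul_sum]
  have hodd : ∑ i ∈ s with ¬Even (w i), (z ^ w i + (-z) ^ w i) = 0 :=
    sum_eq_zero fun i hi => by
      rw [(Nat.not_even_iff_odd.mp (mem_filter.mp hi).2).neg_pow, add_neg_cancel]
  rw [hodd, add_zero]
  refine sum_congr rfl fun i hi => ?_
  rw [(mem_filter.mp hi).2.neg_pow, two_mul]

theorem two_mul_sum_even_wt_pow {R : Type*} [CommRing R] (n : ℕ) (z : R) :
    2 * ∑ J : Fin n → ZMod 2 with Even (wt J), z ^ wt J = (1 + z) ^ n + (1 - z) ^ n := by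
  rw [two_mul_sum_filter_even_pow, sum_add_distrib, sum_pow_wt, sum_pow_wt, sub_eq_add_neg]

namespace Complex

theorem exp_half_mul_I_mul_exp_neg_half_mul_I (x : ℂ) :
    exp (x / 2 * I) * exp (-x / 2 * I) = 1 := by
  rw [← exp_add]; ring_nf; exact exp_zero

theorem exp_neg_mul_I_eq_sq (x : ℂ) : exp (-x * I) = exp (-x / 2 * I) ^ 2 := by
  rw [← exp_nat_mul]; ring_nf

theorem one_add_exp_neg_mul_I (x : ℂ) :
    1 + exp (-x * I) = 2 * exp (-x / 2 * I) * cos (x / 2) := by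
  have h := two_cos (x / 2)
  rw [← neg_div] at h
  linear_combination exp_neg_mul_I_eq_sq x - exp_half_mul_I_mul_exp_neg_half_mul_I x
    - exp (-x / 2 * I) * h

theorem one_sub_exp_neg_mul_I (x : ℂ) :
    1 - exp (-x * I) = 2 * exp (-x / 2 * I) * (I * sin (x / 2)) := by
  have h := two_sin (x / 2)
  rw [← neg_div] at h
  linear_combination -exp_neg_mul_I_eq_sq x - exp_half_mul_I_mul_exp_neg_half_mul_I x
    - exp (-x / 2 * I) * I * h
    + (exp (x / 2 * I) * exp (-x / 2 * I) - exp (-x / 2 * I) ^ 2) * I_sq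

end Complex

/-- **Real-time partition function of the d = 1 Ising model**: summing
`e^{−it‖J‖}` over the even-weight vectors of `𝔽₂ⁿ` (the perpendicular complement of
the constraint space `{0, 𝟙}`) gives
`2^{n−1} e^{−int/2} ((cos(t/2))ⁿ + (i sin(t/2))ⁿ)`. -/
theorem ising_1d_real_time_partition_function {n : ℕ} (hn : 1 ≤ n) (t : ℝ) :
    ∑ J ∈ Finset.univ.filter (fun J : Fin n → ZMod 2 => Even (wt J)),
        Complex.exp (-Complex.I * t * (wt J : ℂ))
      = 2 ^ (n - 1) * Complex.exp (-Complex.I * n * t / 2) *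
          ((Real.cos (t / 2) : ℂ) ^ n + (Complex.I * (Real.sin (t / 2) : ℂ)) ^ n) := by
  have hsummand (J : Fin n → ZMod 2) :
      Complex.exp (-Complex.I * t * (wt J : ℂ)) = Complex.exp (-t * Complex.I) ^ wt J := by
    rw [← Complex.exp_nat_mul]; ring_nf
  have hhalf : Complex.exp (-t / 2 * Complex.I) ^ n = Complex.exp (-Complex.I * n * t / 2) := by
    rw [← Complex.exp_nat_mul]; ring_nf
  have htwo : (2 : ℂ) ^ n = 2 * 2 ^ (n - 1) := by rw [← pow_succ', Nat.sub_add_cancel hn]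
  simp_rw [hsummand]
  push_cast
  apply mul_left_cancel₀ (two_ne_zero' ℂ)
  rw [two_mul_sum_even_wt_pow, Complex.one_add_exp_neg_mul_I, Complex.one_sub_exp_neg_mul_I]
  simp only [mul_pow]
  rw [hhalf, htwo]
  ring
end

section
/- Let t ∈ ℝ be such that |cos(t/2)| ≠ |sin(t/2)|. Then lim_{n→∞} (1/n) · ln |(cos(t/2))ⁿ + (−i·sin(t/2))ⁿ| = ln max(|cos(t/2)|, |sin(t/2)|). (The dynamical free energy density F(t) = −lim (1/n) ln|Z^R(t)| of the d = 1 Ising model exists and equals −ln max(|cos(t/2)|, |sin(t/2)|) away from the critical times t_k = (2k+1)π/2, at which this limiting function is non-analytic — the dynamical phase transition.) -/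
/-!
Factor out the dominant term: if `‖y‖ < ‖x‖` then `x ^ n + y ^ n = x ^ n * (1 + (y / x) ^ n)`,
so `(1 / n) log ‖x ^ n + y ^ n‖ = log ‖x‖ + (1 / n) log ‖1 + (y / x) ^ n‖`, and the last term
vanishes in the limit because `(y / x) ^ n → 0`. For the Ising model take `x = cos (t / 2)`
and `y = -i sin (t / 2)`.
-/

open Filter Topology Real

section NormedField

variable {𝕜 : Type*} [NormedField 𝕜]

lemma tendsto_norm_one_add_pow {z : 𝕜} (hz : ‖z‖ < 1) :
    Tendsto (fun n : ℕ => ‖1 + z ^ n‖) atTop (𝓝 1) := by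
  simpa using ((tendsto_pow_atTop_nhds_zero_of_norm_lt_one hz).const_add 1).norm

lemma tendsto_one_div_mul_log_norm_one_add_pow {z : 𝕜} (hz : ‖z‖ < 1) :
    Tendsto (fun n : ℕ => (1 / (n : ℝ)) * log ‖1 + z ^ n‖) atTop (𝓝 0) := by
  simpa using tendsto_one_div_atTop_nhds_zero_nat.mul
    ((tendsto_norm_one_add_pow hz).log one_ne_zero)

lemma tendsto_one_div_mul_log_norm_add_pow_of_norm_lt {x y : 𝕜} (h : ‖y‖ < ‖x‖) :
    Tendsto (fun n : ℕ => (1 / (n : ℝ)) * log ‖x ^ n + y ^ n‖) atTop (𝓝 (log ‖x‖)) := by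
  have hx : x ≠ 0 := norm_pos_iff.mp ((norm_nonneg y).trans_lt h)
  have hz : ‖y / x‖ < 1 := by rwa [norm_div, div_lt_one (norm_pos_iff.mpr hx)]
  have hlim := (tendsto_one_div_mul_log_norm_one_add_pow hz).const_add (log ‖x‖)
  rw [add_zero] at hlim
  refine hlim.congr' ?_
  filter_upwards [(tendsto_norm_one_add_pow hz).eventually_ne one_ne_zero,
    eventually_ne_atTop 0] with n hn hn0
  have hfactor : x ^ n + y ^ n = x ^ n * (1 + (y / x) ^ n) := by
    rw [div_pow, mul_add, mul_one, mul_div_cancel₀ _ (pow_ne_zero n hx)]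
  rw [hfactor, norm_mul, norm_pow, log_mul (by positivity) hn, log_pow]
  field_simp

lemma tendsto_one_div_mul_log_norm_add_pow {x y : 𝕜} (h : ‖x‖ ≠ ‖y‖) :
    Tendsto (fun n : ℕ => (1 / (n : ℝ)) * log ‖x ^ n + y ^ n‖) atTop
      (𝓝 (log (max ‖x‖ ‖y‖))) := by
  rcases h.lt_or_gt with hxy | hyx
  · simpa only [add_comm, max_eq_right hxy.le] using
      tendsto_one_div_mul_log_norm_add_pow_of_norm_lt hxy
  · simpa only [max_eq_left hyx.le] using tendsto_one_div_mul_log_norm_add_pow_of_norm_lt hyx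

end NormedField

/-- **Existence of the d = 1 Ising dynamical free energy density**: away from the
critical times (where `|cos(t/2)| = |sin(t/2)|`),
`lim_{n→∞} (1/n) ln |cosⁿ(t/2) + (−i sin(t/2))ⁿ| = ln max(|cos(t/2)|, |sin(t/2)|)`. -/
theorem ising_1d_dynamical_free_energy (t : ℝ)
    (h : |Real.cos (t / 2)| ≠ |Real.sin (t / 2)|) :
    Filter.Tendsto
      (fun n : ℕ => (1 / (n : ℝ)) *
        Real.log ‖
          ((Real.cos (t / 2) : ℂ) ^ n + (-Complex.I * (Real.sin (t / 2) : ℂ)) ^ n)‖)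
      Filter.atTop
      (nhds (Real.log (max |Real.cos (t / 2)| |Real.sin (t / 2)|))) := by
  have hcos : ‖(Real.cos (t / 2) : ℂ)‖ = |Real.cos (t / 2)| := Complex.norm_real _
  have hsin : ‖-Complex.I * (Real.sin (t / 2) : ℂ)‖ = |Real.sin (t / 2)| := by
    rw [norm_mul, norm_neg, Complex.norm_I, one_mul, Complex.norm_real, Real.norm_eq_abs]
  rw [← hcos, ← hsin] at h ⊢
  exact tendsto_one_div_mul_log_norm_add_pow h
end

section
/- Fix an integer L ≥ 1 and consider the d = 2 Ising plaquette model on the L × L torus: the 𝔽₂-linear map Δ from functions c : (ZMod L)² → 𝔽₂ (plaquette configurations) to functions on vertices (ZMod L)² given by Δ(c)(v) = c(v) + c(v − (1,0)) + c(v − (0,1)) + c(v − (1,1)). Then ker Δ = { c : there exist r, s : ZMod L → 𝔽₂ with c(i,j) = r(i) + s(j) for all (i,j) }. (The constraint space of the d = 2 Ising plaquette model is exactly the span of the d = 1 subsystem constraints: products of all plaquette stabilizers along a fixed row or along a fixed column.) -/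
lemma z2_step (a b x y X : ZMod 2) (h1 : a + b + x + y = 0) (h2 : x + y = X) :
    a + b = X := by revert a b x y X; decide

lemma z2_tele (a b p q d t : ZMod 2) (h1 : a + b = p + q) (h2 : b + d = q + t) :
    a + d = p + t := by revert a b p q d t; decide

lemma z2_cancel (a b a' b' : ZMod 2) : a + b + (a' + b) + (a + b') + (a' + b') = 0 := by
  revert a b a' b'; decide

/-- **Constraint space of the d = 2 Ising plaquette model**: the kernel of the map `Δ`
on the L × L torus (recording, for each vertex, the 𝔽₂-sum of the plaquette
configuration over the four plaquettes containing that vertex) is exactly the span of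
the d = 1 subsystem (row and column) constraints: configurations of the form
`c(i,j) = r(i) + s(j)`. -/
theorem ising_plaquette_constraints (L : ℕ) (hL : 1 ≤ L)
    (Δ : (ZMod L × ZMod L → ZMod 2) → (ZMod L × ZMod L → ZMod 2))
    (hΔ : ∀ c v, Δ c v = c v + c (v - ((1 : ZMod L), (0 : ZMod L)))
      + c (v - ((0 : ZMod L), (1 : ZMod L))) + c (v - ((1 : ZMod L), (1 : ZMod L))))
    (c : ZMod L × ZMod L → ZMod 2) :
    Δ c = 0 ↔ ∃ r s : ZMod L → ZMod 2, ∀ i j : ZMod L, c (i, j) = r i + s j := by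
  haveI : NeZero L := ⟨by omega⟩
  constructor
  · intro h
    have hv : ∀ v : ZMod L × ZMod L,
        c v + c (v - ((1 : ZMod L), (0 : ZMod L)))
          + c (v - ((0 : ZMod L), (1 : ZMod L)))
          + c (v - ((1 : ZMod L), (1 : ZMod L))) = 0 := by
      intro v
      have := congrFun h v
      rw [hΔ] at this
      simpa using this
    have hrep : ∀ a : ZMod L, ((a.val : ℕ) : ZMod L) = a := by
      intro a; rw [ZMod.natCast_val, ZMod.cast_id]
    -- the i-difference is independent of j
    have key : ∀ i j : ZMod L, c (i, j) + c (i - 1, j) = c (i, 0) + c (i - 1, 0) := by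
      intro i j
      have hn : ∀ n : ℕ, c (i, (n : ZMod L)) + c (i - 1, (n : ZMod L))
          = c (i, 0) + c (i - 1, 0) := by
        intro n
        induction n with
        | zero => simp [CharTwo.add_self_eq_zero]
        | succ n ih =>
          have hstep := hv (i, (n : ZMod L) + 1)
          simp only [Prod.mk_sub_mk, sub_zero, add_sub_cancel_right] at hstep
          push_cast
          exact z2_step _ _ _ _ _ hstep ih
      have := hn j.val
      rwa [hrep j] at this
    -- telescope in the i direction
    refine ⟨fun i => c (i, 0) + c (0, 0), fun j => c (0, j), ?_⟩
    intro i j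
    have hm : ∀ n : ℕ, c ((n : ZMod L), j) + c (0, j) = c ((n : ZMod L), 0) + c (0, 0) := by
      intro n
      induction n with
      | zero => simp [CharTwo.add_self_eq_zero]
      | succ n ih =>
        push_cast
        have hk := key ((n : ZMod L) + 1) j
        rw [add_sub_cancel_right] at hk
        exact z2_tele _ _ _ _ _ _ hk ih
    have := hm i.val
    rw [hrep i] at this
    have : c (i, j) + c (0, j) + c (0, j) = c (i, 0) + c (0, 0) + c (0, j) := by rw [this]
    simpa [add_assoc, CharTwo.add_self_eq_zero] using this
  · rintro ⟨r, s, hc⟩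
    funext v
    obtain ⟨i, j⟩ := v
    rw [hΔ]
    simp only [Prod.mk_sub_mk, sub_zero, hc]
    exact z2_cancel _ _ _ _
end
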